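/- Most maximally monotone operators have a unique zero: let M(X) be the collection of maximally monotone subsets of X × X, and suppose J assigns to each A ∈ M(X) the map J_A : X → X satisfying (J_A x, x − J_A x) ∈ A for all x ∈ X; set R_A := 2J_A − Id and ρ̃(A, B) := ρ(R_A, R_B). Then there exists a sequence (O_q) of subsets of M(X), each ρ̃-open in M(X) and ρ̃-dense in M(X), such that for every A ∈ ⋂_q O_q the map R_A is super-regular; in particular, for every such A there is exactly one x ∈ X with (x, 0) ∈ A. -/

import Mathlib

/-!
The reflected resolvent identifies maximally monotone operators with nonexpansive maps: `R_A` is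
nonexpansive, and every nonexpansive `T` is `R_B` for the graph `B` of the firmly nonexpansive map
`(T + Id) / 2`. So it suffices to work with nonexpansive maps and the metric `rho`. Contractions are
dense there (`c • T → T` as `c → 1`), and they are stable: the iterates of every nonexpansive map
`rho`-close to a contraction pull each ball near the contraction's fixed point. Hence the operators
having a whole `rho`-neighbourhood with this property at scale `1 / (q + 1)` form an open dense set.
On the intersection over `q` the iterates of `R_A` converge uniformly on balls; the limit is the
unique fixed point of `R_A`, and the fixed points of `R_A` are exactly the zeros of `A`.
-/

open RealInnerProductSpace Filter

variable {X : Type*} [NormedAddCommGroup X] [InnerProductSpace ℝ X] [CompleteSpace X]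

/-- `T` is nonexpansive. -/
def Nonexpansive (T : X → X) : Prop := ∀ x y : X, ‖T x - T y‖ ≤ ‖x - y‖

/-- `T` is firmly nonexpansive. -/
def FirmlyNonexpansive (T : X → X) : Prop :=
  ∀ x y : X, ‖T x - T y‖ ^ 2 ≤ ⟪x - y, T x - T y⟫

/-- `‖T₁ - T₂‖ₙ = sup_{‖x‖ ≤ n} ‖T₁ x - T₂ x‖`. -/
noncomputable def ballSup (T₁ T₂ : X → X) (n : ℕ) : ℝ :=
  sSup {r : ℝ | ∃ x : X, ‖x‖ ≤ (n : ℝ) ∧ r = ‖T₁ x - T₂ x‖}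

/-- The metric `ρ` on nonexpansive maps. -/
noncomputable def rho (T₁ T₂ : X → X) : ℝ :=
  ∑' n : ℕ, (1 / 2 ^ (n + 1)) *
    (ballSup T₁ T₂ (n + 1) / (1 + ballSup T₁ T₂ (n + 1)))

/-- The metric `ρ̂` on firmly nonexpansive maps: `ρ̂(T₁,T₂) = ρ(2T₁ - Id, 2T₂ - Id)`. -/
noncomputable def rhoHat (T₁ T₂ : X → X) : ℝ :=
  rho (fun x => (2 : ℝ) • T₁ x - x) (fun x => (2 : ℝ) • T₂ x - x)

/-- `T` is super-regular with limit point `xT`. -/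
def SuperRegularAt (T : X → X) (xT : X) : Prop :=
  ∀ s : ℝ, 0 < s → ∀ ε : ℝ, 0 < ε → ∃ N : ℕ, ∀ n ≥ N, ∀ x : X, ‖x‖ ≤ s → ‖T^[n] x - xT‖ < ε

/-- `T` is super-regular. -/
def SuperRegular (T : X → X) : Prop := ∃ xT : X, SuperRegularAt T xT

/-- `T` is a (Banach) contraction. -/
def Contraction (T : X → X) : Prop :=
  ∃ l : ℝ, 0 ≤ l ∧ l < 1 ∧ ∀ x y : X, ‖T x - T y‖ ≤ l * ‖x - y‖

/-- A subset of `X × X` is monotone. -/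
def MonotoneSet (A : Set (X × X)) : Prop :=
  ∀ p ∈ A, ∀ q ∈ A, (0 : ℝ) ≤ ⟪p.1 - q.1, p.2 - q.2⟫

/-- A subset of `X × X` is maximally monotone. -/
def MaxMonotone (A : Set (X × X)) : Prop :=
  MonotoneSet A ∧ ∀ B : Set (X × X), MonotoneSet B → A ⊆ B → A = B

open Topology

section Rho

variable {E : Type*} [NormedAddCommGroup E]

lemma ballSup_nonneg (T₁ T₂ : E → E) (n : ℕ) : 0 ≤ ballSup T₁ T₂ n :=
  Real.sSup_nonneg (by rintro _ ⟨x, -, rfl⟩; exact norm_nonneg _)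

lemma ballSup_le {T₁ T₂ : E → E} {n : ℕ} {c : ℝ}
    (hc : ∀ x : E, ‖x‖ ≤ n → ‖T₁ x - T₂ x‖ ≤ c) : ballSup T₁ T₂ n ≤ c :=
  csSup_le ⟨_, 0, by simp, rfl⟩ (by rintro _ ⟨x, hx, rfl⟩; exact hc x hx)

lemma le_ballSup {T₁ T₂ : E → E} (h₁ : Nonexpansive T₁) (h₂ : Nonexpansive T₂) {n : ℕ} {x : E}
    (hx : ‖x‖ ≤ n) : ‖T₁ x - T₂ x‖ ≤ ballSup T₁ T₂ n := by
  refine le_csSup ⟨‖T₁ 0 - T₂ 0‖ + 2 * n, ?_⟩ ⟨x, hx, rfl⟩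
  rintro _ ⟨y, hy, rfl⟩
  calc ‖T₁ y - T₂ y‖ = ‖(T₁ y - T₁ 0) + (T₁ 0 - T₂ 0) + (T₂ 0 - T₂ y)‖ := by congr 1; abel
    _ ≤ ‖T₁ y - T₁ 0‖ + ‖T₁ 0 - T₂ 0‖ + ‖T₂ 0 - T₂ y‖ := norm_add₃_le
    _ ≤ ‖y - 0‖ + ‖T₁ 0 - T₂ 0‖ + ‖0 - y‖ := by gcongr; exacts [h₁ y 0, h₂ 0 y]
    _ ≤ ‖T₁ 0 - T₂ 0‖ + 2 * n := by rw [sub_zero, zero_sub, norm_neg]; linarith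

lemma div_one_add_le_div_one_add {a b : ℝ} (ha : 0 ≤ a) (hab : a ≤ b) :
    a / (1 + a) ≤ b / (1 + b) := by
  rw [div_le_div_iff₀ (by linarith) (by linarith)]
  nlinarith

lemma add_div_one_add_le {a b : ℝ} (ha : 0 ≤ a) (hb : 0 ≤ b) :
    (a + b) / (1 + (a + b)) ≤ a / (1 + a) + b / (1 + b) := by
  rw [add_div]
  gcongr <;> linarith

noncomputable def rhoTerm (T₁ T₂ : E → E) (n : ℕ) : ℝ :=
  1 / 2 ^ (n + 1) * (ballSup T₁ T₂ (n + 1) / (1 + ballSup T₁ T₂ (n + 1)))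

lemma rho_eq_tsum_rhoTerm (T₁ T₂ : E → E) : rho T₁ T₂ = ∑' n, rhoTerm T₁ T₂ n := rfl

lemma rhoTerm_nonneg (T₁ T₂ : E → E) (n : ℕ) : 0 ≤ rhoTerm T₁ T₂ n := by
  have := ballSup_nonneg T₁ T₂ (n + 1)
  unfold rhoTerm
  positivity

lemma rhoTerm_le_geometric (T₁ T₂ : E → E) (n : ℕ) : rhoTerm T₁ T₂ n ≤ (1 / 2) ^ (n + 1) := by
  have := ballSup_nonneg T₁ T₂ (n + 1)
  rw [rhoTerm, one_div_pow]
  exact mul_le_of_le_one_right (by positivity) ((div_le_one (by linarith)).2 (by linarith))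

lemma summable_rhoTerm (T₁ T₂ : E → E) : Summable (rhoTerm T₁ T₂) :=
  .of_nonneg_of_le (rhoTerm_nonneg T₁ T₂) (rhoTerm_le_geometric T₁ T₂)
    ((summable_nat_add_iff 1).2 summable_geometric_two)

lemma rhoTerm_le_rho (T₁ T₂ : E → E) (n : ℕ) : rhoTerm T₁ T₂ n ≤ rho T₁ T₂ :=
  (summable_rhoTerm T₁ T₂).le_tsum n fun m _ => rhoTerm_nonneg T₁ T₂ m

lemma rho_self (T : E → E) : rho T T = 0 := by
  have h : ∀ n, ballSup T T n = 0 := fun n =>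
    le_antisymm (ballSup_le fun x _ => by simp) (ballSup_nonneg T T n)
  simp [rho, h]

lemma rho_triangle {T₁ T₂ T₃ : E → E} (h₁ : Nonexpansive T₁) (h₂ : Nonexpansive T₂)
    (h₃ : Nonexpansive T₃) : rho T₁ T₃ ≤ rho T₁ T₂ + rho T₂ T₃ := by
  simp only [rho_eq_tsum_rhoTerm]
  rw [← (summable_rhoTerm T₁ T₂).tsum_add (summable_rhoTerm T₂ T₃)]
  refine (summable_rhoTerm T₁ T₃).tsum_le_tsum (fun n => ?_)
    ((summable_rhoTerm T₁ T₂).add (summable_rhoTerm T₂ T₃))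
  rw [rhoTerm, rhoTerm, rhoTerm, ← mul_add]
  gcongr
  have h₁₂ := ballSup_nonneg T₁ T₂ (n + 1)
  have h₂₃ := ballSup_nonneg T₂ T₃ (n + 1)
  refine (div_one_add_le_div_one_add (ballSup_nonneg T₁ T₃ _) (ballSup_le fun x hx => ?_)).trans
    (add_div_one_add_le h₁₂ h₂₃)
  exact (norm_sub_le_norm_sub_add_norm_sub _ (T₂ x) _).trans
    (add_le_add (le_ballSup h₁ h₂ hx) (le_ballSup h₂ h₃ hx))

lemma norm_sub_lt_of_rho_lt {T₁ T₂ : E → E} (h₁ : Nonexpansive T₁) (h₂ : Nonexpansive T₂)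
    {m : ℕ} {δ : ℝ} (hδ : 0 < δ) (h : rho T₁ T₂ < 1 / 2 ^ (m + 1) * (δ / (1 + δ))) {x : E}
    (hx : ‖x‖ ≤ m + 1) : ‖T₁ x - T₂ x‖ < δ := by
  have hsup : ballSup T₁ T₂ (m + 1) < δ := by
    by_contra! hle
    have := rhoTerm_le_rho T₁ T₂ m
    rw [rhoTerm] at this
    have := div_one_add_le_div_one_add hδ.le hle
    have : (1 / 2 ^ (m + 1) : ℝ) * (δ / (1 + δ)) ≤
        1 / 2 ^ (m + 1) * (ballSup T₁ T₂ (m + 1) / (1 + ballSup T₁ T₂ (m + 1))) := by gcongr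
    linarith
  exact (le_ballSup h₁ h₂ (by exact_mod_cast hx)).trans_lt hsup

lemma tendsto_rho_of_tendsto_ballSup {ι : Type*} {l : Filter ι} {S : ι → E → E} {T : E → E}
    (h : ∀ n, Tendsto (fun k => ballSup (S k) T n) l (𝓝 0)) :
    Tendsto (fun k => rho (S k) T) l (𝓝 0) := by
  have hterm : ∀ n : ℕ, Tendsto (fun k => rhoTerm (S k) T n) l (𝓝 0) := fun n => by
    simpa [rhoTerm] using
      ((h (n + 1)).div (tendsto_const_nhds.add (h (n + 1))) (by norm_num)).const_mul
        (1 / 2 ^ (n + 1) : ℝ)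
  have := tendsto_tsum_of_dominated_convergence
    ((summable_nat_add_iff 1).2 summable_geometric_two) hterm (.of_forall fun k n => by
      rw [Real.norm_of_nonneg (rhoTerm_nonneg _ _ n)]
      exact rhoTerm_le_geometric _ _ n)
  rwa [tsum_zero] at this

end Rho

lemma norm_iterate_sub_le {E : Type*} [SeminormedAddCommGroup E] {S : E → E} {c : E}
    {l δ R : ℝ} (hl0 : 0 ≤ l) (hl1 : l < 1) (hδ : 0 ≤ δ)
    (hS : ∀ y, ‖y - c‖ ≤ R → ‖S y - c‖ ≤ l * ‖y - c‖ + δ) {x : E}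
    (hx : ‖x - c‖ + δ / (1 - l) ≤ R) (k : ℕ) :
    ‖S^[k] x - c‖ ≤ l ^ k * ‖x - c‖ + δ / (1 - l) := by
  induction k with
  | zero =>
    have := sub_pos.2 hl1
    simp only [Function.iterate_zero, id_eq, pow_zero, one_mul, le_add_iff_nonneg_right]
    positivity
  | succ k ih =>
    have hlk : l ^ k * ‖x - c‖ ≤ ‖x - c‖ :=
      mul_le_of_le_one_left (norm_nonneg _) (pow_le_one₀ hl0 hl1.le)
    have hl : l * (δ / (1 - l)) + δ = δ / (1 - l) := by
      field_simp [(sub_pos.2 hl1).ne']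
      ring
    rw [Function.iterate_succ_apply']
    calc ‖S (S^[k] x) - c‖ ≤ l * ‖S^[k] x - c‖ + δ := hS _ (by linarith)
      _ ≤ l * (l ^ k * ‖x - c‖ + δ / (1 - l)) + δ := by gcongr
      _ = l ^ (k + 1) * ‖x - c‖ + δ / (1 - l) := by rw [pow_succ]; linear_combination hl

section Contraction

variable {E : Type*} [NormedAddCommGroup E]

lemma Nonexpansive.continuous {T : E → E} (hT : Nonexpansive T) : Continuous T :=
  (LipschitzWith.mk_one fun x y => by simpa only [dist_eq_norm] using hT x y).continuous

lemma Contraction.nonexpansive {T : E → E} (hT : Contraction T) : Nonexpansive T := by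
  obtain ⟨l, -, hl1, hlip⟩ := hT
  exact fun x y => (hlip x y).trans (mul_le_of_le_one_left (norm_nonneg _) hl1.le)

lemma Contraction.exists_isFixedPt [CompleteSpace E] {T : E → E} (hT : Contraction T) :
    ∃ z, Function.IsFixedPt T z := by
  obtain ⟨l, hl0, hl1, hlip⟩ := hT
  have : Nonempty E := ⟨0⟩
  have hc : ContractingWith l.toNNReal T := by
    refine ⟨by exact_mod_cast Real.toNNReal_lt_one.2 hl1, .of_dist_le' fun x y => ?_⟩
    simpa only [dist_eq_norm] using hlip x y
  exact ⟨_, hc.fixedPoint_isFixedPt⟩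

lemma Contraction.exists_uniform_attraction [CompleteSpace E] {T : E → E} (hT : Contraction T)
    (s : ℝ) {ε : ℝ} (hε : 0 < ε) :
    ∃ y : E, ∃ r > 0, ∃ N : ℕ, ∀ S : E → E, Nonexpansive S → rho S T < r →
      ∀ n ≥ N, ∀ x : E, ‖x‖ ≤ s → ‖S^[n] x - y‖ < ε := by
  obtain ⟨y, hy⟩ := hT.exists_isFixedPt
  have hTne := hT.nonexpansive
  obtain ⟨l, hl0, hl1, hlip⟩ := hT
  -- `δ` is chosen so that the drift `δ / (1 - l)` of the perturbed orbits is `ε / 2`; those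
  -- orbits then stay in the ball of radius `s + 2‖y‖ + ε / 2 ≤ m + 1`, on which `S` is
  -- `δ`-close to `T`.
  set δ := ε * (1 - l) / 2 with hδdef
  have hδ : 0 < δ := by have := sub_pos.2 hl1; positivity
  have hδl : δ / (1 - l) = ε / 2 := by
    rw [hδdef, div_eq_iff (sub_pos.2 hl1).ne']
    ring
  obtain ⟨m, hm⟩ := exists_nat_ge (s + ε / 2 + 2 * ‖y‖)
  obtain ⟨N, hN⟩ : ∃ N : ℕ, ∀ n ≥ N, l ^ n * (s + ‖y‖) < ε / 2 := eventually_atTop.1 <|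
    ((tendsto_pow_atTop_nhds_zero_of_lt_one hl0 hl1).mul_const _).eventually
      (gt_mem_nhds (by simpa using half_pos hε))
  refine ⟨y, 1 / 2 ^ (m + 1) * (δ / (1 + δ)), by positivity, N,
    fun S hS hρ n hn x hx => ?_⟩
  have hstep : ∀ z, ‖z - y‖ ≤ s + ‖y‖ + ε / 2 → ‖S z - y‖ ≤ l * ‖z - y‖ + δ := by
    intro z hz
    have hz' : ‖z‖ ≤ m + 1 := by linarith [norm_le_norm_add_norm_sub' z y]
    calc ‖S z - y‖ ≤ ‖S z - T z‖ + ‖T z - T y‖ := by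
          rw [hy.eq]; exact norm_sub_le_norm_sub_add_norm_sub _ _ _
      _ ≤ δ + l * ‖z - y‖ := add_le_add (norm_sub_lt_of_rho_lt hS hTne hδ hρ hz').le (hlip z y)
      _ = l * ‖z - y‖ + δ := add_comm _ _
  have hxy : ‖x - y‖ ≤ s + ‖y‖ := (norm_sub_le x y).trans (by linarith)
  calc ‖S^[n] x - y‖ ≤ l ^ n * ‖x - y‖ + δ / (1 - l) :=
        norm_iterate_sub_le hl0 hl1 hδ.le hstep (by linarith) n
    _ ≤ l ^ n * (s + ‖y‖) + ε / 2 := by rw [hδl]; gcongr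
    _ < ε := by linarith [hN n hn]

end Contraction

section SuperRegular

variable {E : Type*} [NormedAddCommGroup E]

lemma superRegular_of_forall_exists [CompleteSpace E] {T : E → E}
    (h : ∀ s ε : ℝ, 0 < ε → ∃ y : E, ∃ N : ℕ, ∀ n ≥ N, ∀ x : E, ‖x‖ ≤ s → ‖T^[n] x - y‖ < ε) :
    SuperRegular T := by
  have hcauchy : CauchySeq fun n => T^[n] 0 := by
    refine Metric.cauchySeq_iff'.2 fun ε hε => ?_
    obtain ⟨y, N, hN⟩ := h 0 (ε / 2) (half_pos hε)
    refine ⟨N, fun n hn => ?_⟩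
    rw [dist_eq_norm]
    linarith [norm_sub_le_norm_sub_add_norm_sub (T^[n] 0) y (T^[N] 0), norm_sub_rev y (T^[N] 0),
      hN n hn 0 (by simp), hN N le_rfl 0 (by simp)]
  obtain ⟨z, hz⟩ := cauchySeq_tendsto_of_complete hcauchy
  refine ⟨z, fun s hs ε hε => ?_⟩
  obtain ⟨y, N, hN⟩ := h s (ε / 2) (half_pos hε)
  have hyz : ‖z - y‖ ≤ ε / 2 := le_of_tendsto (hz.sub_const y).norm
    (eventually_atTop.2 ⟨N, fun n hn => (hN n hn 0 (by simpa using hs.le)).le⟩)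
  refine ⟨N, fun n hn x hx => ?_⟩
  linarith [norm_sub_le_norm_sub_add_norm_sub (T^[n] x) y z, norm_sub_rev y z, hN n hn x hx]

lemma SuperRegularAt.tendsto_iterate {T : E → E} {z : E} (h : SuperRegularAt T z) (x : E) :
    Tendsto (fun n => T^[n] x) atTop (𝓝 z) := by
  refine Metric.tendsto_atTop.2 fun ε hε => ?_
  obtain ⟨N, hN⟩ := h (‖x‖ + 1) (by positivity) ε hε
  exact ⟨N, fun n hn => by rw [dist_eq_norm]; exact hN n hn x (by linarith)⟩

lemma SuperRegular.existsUnique_isFixedPt {T : E → E} (h : SuperRegular T) (hT : Continuous T) :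
    ∃! z, Function.IsFixedPt T z := by
  obtain ⟨z, hz⟩ := h
  refine ⟨z, isFixedPt_of_tendsto_iterate (hz.tendsto_iterate 0) hT.continuousAt,
    fun y hy => tendsto_nhds_unique ?_ (hz.tendsto_iterate y)⟩
  simp only [Function.iterate_fixed hy, tendsto_const_nhds]

end SuperRegular

section UniformAttraction

variable {E : Type*} [NormedAddCommGroup E] {ι : Type*} (P : Set ι) (R : ι → E → E)

def uniformlyAttractingSet (s ε : ℝ) : Set ι :=
  {i ∈ P | ∃ y : E, ∃ r > 0, ∃ N : ℕ, ∀ j ∈ P, rho (R j) (R i) < r →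
    ∀ n ≥ N, ∀ x : E, ‖x‖ ≤ s → ‖(R j)^[n] x - y‖ < ε}

variable {P R}

lemma uniformlyAttractingSet_mono {s s' ε ε' : ℝ} (hs : s ≤ s') (hε : ε' ≤ ε) :
    uniformlyAttractingSet P R s' ε' ⊆ uniformlyAttractingSet P R s ε := by
  rintro i ⟨hi, y, r, hr, N, h⟩
  exact ⟨hi, y, r, hr, N, fun j hj hρ n hn x hx =>
    (h j hj hρ n hn x (hx.trans hs)).trans_le hε⟩

lemma exists_rho_ball_subset_uniformlyAttractingSet (hR : ∀ i ∈ P, Nonexpansive (R i))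
    {s ε : ℝ} {i : ι} (hi : i ∈ uniformlyAttractingSet P R s ε) :
    ∃ r > 0, ∀ j ∈ P, rho (R j) (R i) < r → j ∈ uniformlyAttractingSet P R s ε := by
  obtain ⟨hiP, y, r, hr, N, h⟩ := hi
  refine ⟨r / 2, half_pos hr, fun j hj hji => ⟨hj, y, r / 2, half_pos hr, N,
    fun k hk hkj => h k hk ?_⟩⟩
  linarith [rho_triangle (hR k hk) (hR j hj) (hR i hiP)]

lemma mem_uniformlyAttractingSet_of_contraction [CompleteSpace E]
    (hR : ∀ i ∈ P, Nonexpansive (R i)) {i : ι} (hi : i ∈ P) (hc : Contraction (R i))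
    (s : ℝ) {ε : ℝ} (hε : 0 < ε) : i ∈ uniformlyAttractingSet P R s ε := by
  obtain ⟨y, r, hr, N, h⟩ := hc.exists_uniform_attraction s hε
  exact ⟨hi, y, r, hr, N, fun j hj => h (R j) (hR j hj)⟩

lemma superRegular_of_forall_mem_uniformlyAttractingSet [CompleteSpace E] {i : ι}
    (h : ∀ s ε : ℝ, 0 < ε → i ∈ uniformlyAttractingSet P R s ε) : SuperRegular (R i) := by
  refine superRegular_of_forall_exists fun s ε hε => ?_
  obtain ⟨hi, y, r, hr, N, hN⟩ := h s ε hε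
  exact ⟨y, N, hN i hi (by rwa [rho_self])⟩

theorem exists_rho_open_dense_superRegular [CompleteSpace E]
    (hR : ∀ i ∈ P, Nonexpansive (R i))
    (hdense : ∀ i ∈ P, ∀ ε > 0, ∃ j ∈ P, Contraction (R j) ∧ rho (R j) (R i) < ε) :
    ∃ O : ℕ → Set ι, (∀ q, O q ⊆ P) ∧
      (∀ q, ∀ i ∈ O q, ∃ r > 0, ∀ j ∈ P, rho (R j) (R i) < r → j ∈ O q) ∧
      (∀ q, ∀ i ∈ P, ∀ ε > 0, ∃ j ∈ O q, rho (R j) (R i) < ε) ∧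
      ∀ i ∈ ⋂ q, O q, SuperRegular (R i) := by
  refine ⟨fun q => uniformlyAttractingSet P R (q + 1) (1 / (q + 1)), fun q i hi => hi.1,
    fun q i hi => exists_rho_ball_subset_uniformlyAttractingSet hR hi,
    fun q i hi ε hε => ?_,
    fun i hi => superRegular_of_forall_mem_uniformlyAttractingSet (P := P) ?_⟩
  · obtain ⟨j, hj, hc, hji⟩ := hdense i hi ε hε
    exact ⟨j, mem_uniformlyAttractingSet_of_contraction hR hj hc _ (by positivity), hji⟩
  · intro s ε hε
    obtain ⟨q₁, hs⟩ := exists_nat_ge s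
    obtain ⟨q₂, hq₂⟩ := exists_nat_one_div_lt hε
    refine uniformlyAttractingSet_mono ?_ ?_ (Set.mem_iInter.1 hi (max q₁ q₂))
    · exact hs.trans (by exact_mod_cast (le_max_left q₁ q₂).trans (Nat.le_succ _))
    · refine le_trans ?_ hq₂.le
      gcongr
      exact_mod_cast le_max_right q₁ q₂

end UniformAttraction

section Nonexpansive

variable {E : Type*} [NormedAddCommGroup E] [NormedSpace ℝ E] {T : E → E}

lemma Nonexpansive.contraction_smul (hT : Nonexpansive T) {c : ℝ} (hc0 : 0 ≤ c) (hc1 : c < 1) :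
    Contraction fun x => c • T x :=
  ⟨c, hc0, hc1, fun x y => by
    rw [← smul_sub, norm_smul, Real.norm_of_nonneg hc0]
    exact mul_le_mul_of_nonneg_left (hT x y) hc0⟩

lemma Nonexpansive.tendsto_rho_smul (hT : Nonexpansive T) :
    Tendsto (fun c : ℝ => rho (fun x => c • T x) T) (𝓝 1) (𝓝 0) := by
  refine tendsto_rho_of_tendsto_ballSup fun n => ?_
  have hbound : ∀ c : ℝ, ballSup (fun x => c • T x) T n ≤ |c - 1| * (‖T 0‖ + n) :=
    fun c => ballSup_le fun x hx => by
      rw [show c • T x - T x = (c - 1) • T x by rw [sub_smul, one_smul], norm_smul,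
        Real.norm_eq_abs]
      have hx0 := hT x 0
      rw [sub_zero] at hx0
      gcongr
      linarith [norm_le_norm_add_norm_sub' (T x) (T 0)]
  have hlim : Tendsto (fun c : ℝ => |c - 1| * (‖T 0‖ + n)) (𝓝 1) (𝓝 0) := by
    have : Continuous fun c : ℝ => |c - 1| * (‖T 0‖ + n) := by fun_prop
    simpa using this.tendsto 1
  exact squeeze_zero (fun c => ballSup_nonneg _ _ n) hbound hlim

lemma Nonexpansive.exists_contraction_rho_lt (hT : Nonexpansive T) {ε : ℝ} (hε : 0 < ε) :
    ∃ S : E → E, Contraction S ∧ rho S T < ε := by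
  have hc : ∀ᶠ c in 𝓝[<] 1, c ∈ Set.Ioo (0 : ℝ) 1 := Ioo_mem_nhdsLT zero_lt_one
  obtain ⟨c, hc, hcε⟩ := (hc.and
    ((hT.tendsto_rho_smul.mono_left nhdsWithin_le_nhds).eventually (gt_mem_nhds hε))).exists
  exact ⟨_, hT.contraction_smul hc.1.le hc.2, hcε⟩

end Nonexpansive

section MonotoneOperator

variable {H : Type*} [NormedAddCommGroup H] [InnerProductSpace ℝ H]

lemma MonotoneSet.mono {A B : Set (H × H)} (hB : MonotoneSet B) (hAB : A ⊆ B) :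
    MonotoneSet A :=
  fun p hp q hq => hB p (hAB hp) q (hAB hq)

lemma MonotoneSet.eq_of_mem {A : Set (H × H)} (hA : MonotoneSet A) {x u v : H}
    (hu : (u, x - u) ∈ A) (hv : (v, x - v) ∈ A) : u = v := by
  have h := hA _ hu _ hv
  rw [show (x - u) - (x - v) = -(u - v) by abel, inner_neg_right,
    real_inner_self_eq_norm_sq] at h
  have : ‖u - v‖ = 0 := by nlinarith [norm_nonneg (u - v)]
  rwa [norm_eq_zero, sub_eq_zero] at this

lemma firmlyNonexpansive_iff_monotoneSet_range {j : H → H} :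
    FirmlyNonexpansive j ↔ MonotoneSet (Set.range fun x => (j x, x - j x)) := by
  have key : ∀ x y, ⟪j x - j y, (x - j x) - (y - j y)⟫ =
      ⟪x - y, j x - j y⟫ - ‖j x - j y‖ ^ 2 := fun x y => by
    rw [show (x - j x) - (y - j y) = (x - y) - (j x - j y) by abel, inner_sub_right,
      real_inner_self_eq_norm_sq, real_inner_comm]
  constructor
  · rintro h _ ⟨x, rfl⟩ _ ⟨y, rfl⟩
    linarith [key x y, h x y]
  · intro h x y
    linarith [key x y, h _ ⟨x, rfl⟩ _ ⟨y, rfl⟩]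

lemma firmlyNonexpansive_iff_nonexpansive_reflection {j : H → H} :
    FirmlyNonexpansive j ↔ Nonexpansive fun x => (2 : ℝ) • j x - x := by
  have key : ∀ x y, ‖(2 : ℝ) • j x - x - ((2 : ℝ) • j y - y)‖ ^ 2 =
      ‖x - y‖ ^ 2 + 4 * (‖j x - j y‖ ^ 2 - ⟪x - y, j x - j y⟫) := fun x y => by
    rw [show (2 : ℝ) • j x - x - ((2 : ℝ) • j y - y) = (2 : ℝ) • (j x - j y) - (x - y) by
      rw [smul_sub]; abel, norm_sub_sq_real, norm_smul, real_inner_smul_left, real_inner_comm]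
    norm_num
    ring
  refine forall₂_congr fun x y => ?_
  rw [← sq_le_sq₀ (norm_nonneg _) (norm_nonneg _), key]
  constructor <;> intro h <;> linarith

lemma firmlyNonexpansive_of_forall_mem {A : Set (H × H)} (hA : MonotoneSet A) {j : H → H}
    (hj : ∀ x, (j x, x - j x) ∈ A) : FirmlyNonexpansive j :=
  firmlyNonexpansive_iff_monotoneSet_range.2 (hA.mono (Set.range_subset_iff.2 hj))

lemma FirmlyNonexpansive.maxMonotone_range {j : H → H} (hj : FirmlyNonexpansive j) :
    MaxMonotone (Set.range fun x => (j x, x - j x)) := by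
  refine ⟨firmlyNonexpansive_iff_monotoneSet_range.1 hj, fun B hB hsub => hsub.antisymm ?_⟩
  rintro ⟨y, v⟩ hyv
  have hy : y = j (y + v) :=
    hB.eq_of_mem (x := y + v) (by rwa [add_sub_cancel_left]) (hsub ⟨y + v, rfl⟩)
  exact ⟨y + v, Prod.ext hy.symm (by simp only; rw [← hy, add_sub_cancel_left])⟩

def IsResolventFamily (J : Set (H × H) → H → H) : Prop :=
  ∀ A : Set (H × H), MaxMonotone A → ∀ x : H, (J A x, x - J A x) ∈ A

variable {J : Set (H × H) → H → H}

lemma nonexpansive_reflection_resolvent (hJ : IsResolventFamily J)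
    {A : Set (H × H)} (hA : MaxMonotone A) :
    Nonexpansive fun x => (2 : ℝ) • J A x - x :=
  firmlyNonexpansive_iff_nonexpansive_reflection.1 (firmlyNonexpansive_of_forall_mem hA.1 (hJ A hA))

lemma exists_maxMonotone_reflection_resolvent_eq (hJ : IsResolventFamily J)
    {T : H → H} (hT : Nonexpansive T) :
    ∃ B, MaxMonotone B ∧ (fun x => (2 : ℝ) • J B x - x) = T := by
  set j : H → H := fun x => (2 : ℝ)⁻¹ • (T x + x)
  have hjT : (fun x => (2 : ℝ) • j x - x) = T := by
    funext x
    simp only [j, smul_smul]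
    norm_num
  have hB := (firmlyNonexpansive_iff_nonexpansive_reflection.2 (hjT ▸ hT)).maxMonotone_range
  refine ⟨_, hB, ?_⟩
  rw [← hjT]
  funext x
  rw [hB.1.eq_of_mem (hJ _ hB x) ⟨x, rfl⟩]

lemma mem_zero_iff_isFixedPt_reflection_resolvent (hJ : IsResolventFamily J)
    {A : Set (H × H)} (hA : MaxMonotone A)
    (x : H) : (x, (0 : H)) ∈ A ↔ Function.IsFixedPt (fun x => (2 : ℝ) • J A x - x) x := by
  rw [Function.IsFixedPt, sub_eq_iff_eq_add, ← two_smul ℝ x, smul_right_inj two_ne_zero]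
  constructor
  · intro hx
    exact hA.1.eq_of_mem (hJ A hA x) (by rwa [sub_self])
  · intro hx
    simpa [hx] using hJ A hA x

end MonotoneOperator

/-- most maximally monotone operators have a unique zero. -/
theorem generic_unique_zero
    (J : Set (X × X) → X → X)
    (hJ : ∀ A : Set (X × X), MaxMonotone A → ∀ x : X, (J A x, x - J A x) ∈ A) :
    ∃ O : ℕ → Set (Set (X × X)),
      (∀ q, O q ⊆ {A : Set (X × X) | MaxMonotone A}) ∧
      (∀ q, ∀ A ∈ O q, ∃ r > (0 : ℝ), ∀ B : Set (X × X), MaxMonotone B →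
        rho (fun x => (2 : ℝ) • J B x - x) (fun x => (2 : ℝ) • J A x - x) < r → B ∈ O q) ∧
      (∀ q, ∀ A : Set (X × X), MaxMonotone A → ∀ ε : ℝ, 0 < ε → ∃ B ∈ O q,
        rho (fun x => (2 : ℝ) • J B x - x) (fun x => (2 : ℝ) • J A x - x) < ε) ∧
      (∀ A ∈ ⋂ q, O q,
        SuperRegular (fun x => (2 : ℝ) • J A x - x) ∧ ∃! x : X, (x, (0 : X)) ∈ A) := by
  have hR : ∀ A ∈ {A : Set (X × X) | MaxMonotone A},
      Nonexpansive fun x => (2 : ℝ) • J A x - x :=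
    fun A hA => nonexpansive_reflection_resolvent hJ hA
  have hdense : ∀ A ∈ {A : Set (X × X) | MaxMonotone A}, ∀ ε > 0,
      ∃ B ∈ {A : Set (X × X) | MaxMonotone A}, Contraction (fun x => (2 : ℝ) • J B x - x) ∧
        rho (fun x => (2 : ℝ) • J B x - x) (fun x => (2 : ℝ) • J A x - x) < ε := by
    intro A hA ε hε
    obtain ⟨S, hS, hSA⟩ := (hR A hA).exists_contraction_rho_lt hε
    obtain ⟨B, hB, rfl⟩ := exists_maxMonotone_reflection_resolvent_eq hJ hS.nonexpansive
    exact ⟨B, hB, hS, hSA⟩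
  obtain ⟨O, hOP, hopen, hOdense, hreg⟩ := exists_rho_open_dense_superRegular hR hdense
  refine ⟨O, hOP, hopen, hOdense, fun A hA => ⟨hreg A hA, ?_⟩⟩
  have hAmax : MaxMonotone A := hOP 0 (Set.mem_iInter.1 hA 0)
  rw [existsUnique_congr (mem_zero_iff_isFixedPt_reflection_resolvent hJ hAmax)]
  exact (hreg A hA).existsUnique_isFixedPt (hR A hAmax).continuous
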